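/- Define the adjoining singular words v_n by v_n = a · s_{n+1}^{d_{n+2}-1} s_n · b^{-1} for odd n and v_n = b · s_{n+1}^{d_{n+2}-1} s_n · a^{-1} for even n (i.e., the last letter of s_{n+1}^{d_{n+2}-1} s_n is removed and the appropriate letter prepended). Then each v_n is a palindrome for all n ≥ -1. -/

import Mathlib

/-!
For `n ≥ 1` write `sₙ = A x y` and `sₙ₊₁ = B y x` with `y ≠ x` and `A`, `B` palindromes
(central words). The relation `A x y B = B y x A` is preserved by the recurrence
`sₙ₊₂ = sₙ₊₁^k sₙ`, which yields the next pair `(B, (B y x)^(k-1) A x y B)`.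
Then `vₙ = x (B y x)^(dₙ₊₂ - 1) A x`, and `(B y x)^m A` is a palindrome because
conjugating by the palindrome `A` turns `B y x` into its reversal `x y B`.
For `n = -1, 0` the word is `x (p x)^m` with `p` a power of `a`, a palindrome
for the same reason.
-/

/-- Letters: `a` is `false`, `b` is `true`. -/
abbrev Word := List Bool

/-- `wpow w k` is the `k`-fold concatenation `w^k`. -/
def wpow (w : Word) (k : ℕ) : Word := (List.replicate k w).flatten

theorem wpow_succ (w : Word) (k : ℕ) : wpow w (k + 1) = w ++ wpow w k := by
  simp [wpow, List.replicate_succ]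

theorem wpow_succ' (w : Word) (k : ℕ) : wpow w (k + 1) = wpow w k ++ w := by
  simp [wpow, List.replicate_succ']

theorem wpow_singleton (c : Bool) (k : ℕ) : wpow [c] k = List.replicate k c :=
  List.flatten_replicate_singleton

theorem reverse_wpow (w : Word) (k : ℕ) : (wpow w k).reverse = wpow w.reverse k := by
  simp [wpow, List.reverse_flatten]

theorem wpow_append_eq_append_wpow {u u' T : Word} (h : u ++ T = T ++ u') (k : ℕ) :
    wpow u k ++ T = T ++ wpow u' k := by
  induction k with
  | zero => simp [wpow]
  | succ k ih => rw [wpow_succ', List.append_assoc, h, ← List.append_assoc, ih,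
      List.append_assoc, ← wpow_succ']

theorem palindrome_wpow_append {u A : Word} (hA : A.Palindrome)
    (h : u ++ A = A ++ u.reverse) (k : ℕ) : (wpow u k ++ A).Palindrome := by
  refine .of_reverse_eq ?_
  rw [List.reverse_append, reverse_wpow, hA.reverse_eq,
    wpow_append_eq_append_wpow h k]

theorem palindrome_cons_wpow {p : Word} (hp : p.Palindrome) (x : Bool) (k : ℕ) :
    (x :: wpow (p ++ [x]) k).Palindrome := by
  have hrot : [x] ++ wpow (p ++ [x]) k = wpow (x :: p) k ++ [x] :=
    (wpow_append_eq_append_wpow (by simp) k).symm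
  rw [← List.singleton_append, hrot]
  exact palindrome_wpow_append (.singleton x) (by simp [hp.reverse_eq]) k

/-- For consecutive standard words `s = sₙ`, `t = sₙ₊₁` (`n ≥ 1`),
`A` and `B` are their central words. -/
def IsCentralPair (x : Bool) (s t : Word) : Prop :=
  ∃ A B : Word, A.Palindrome ∧ B.Palindrome ∧ s = A ++ [x, !x] ∧ t = B ++ [!x, x] ∧
    A ++ [x, !x] ++ B = B ++ [!x, x] ++ A

theorem isCentralPair_base (e f : ℕ) :
    IsCentralPair false (List.replicate (e + 1) false ++ [true])
      (wpow (List.replicate (e + 1) false ++ [true]) (f + 1) ++ [false]) := by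
  set r := List.replicate (e + 1) false
  have hr : r.Palindrome := .of_reverse_eq List.reverse_replicate
  have hr_cons : false :: List.replicate e false = r := List.replicate_succ.symm
  have hr_concat : List.replicate e false ++ [false] = r := List.replicate_succ'.symm
  refine ⟨List.replicate e false, wpow (r ++ [true]) f ++ r,
    .of_reverse_eq List.reverse_replicate,
    palindrome_wpow_append hr (by simp [hr.reverse_eq]) f, ?_, ?_, ?_⟩
  · simp [← hr_concat]
  · simp [wpow_succ']
  · calc List.replicate e false ++ [false, true] ++ (wpow (r ++ [true]) f ++ r)
        = wpow (r ++ [true]) (f + 1) ++ r := by simp [wpow_succ, ← hr_concat]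
      _ = wpow (r ++ [true]) f ++ r ++ [true, false] ++ List.replicate e false := by
        simp [wpow_succ', ← hr_cons]

theorem IsCentralPair.succ {x : Bool} {s t : Word} (h : IsCentralPair x s t) (k : ℕ) :
    IsCentralPair (!x) t (wpow t (k + 1) ++ s) := by
  obtain ⟨A, B, hA, hB, rfl, rfl, hrel⟩ := h
  have hP : (A ++ [x, !x] ++ B).Palindrome := .of_reverse_eq (by
    simpa [hA.reverse_eq, hB.reverse_eq] using hrel.symm)
  have hu : B ++ [!x, x] ++ (A ++ [x, !x] ++ B) = A ++ [x, !x] ++ B ++ [x, !x] ++ B := by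
    simpa using congrArg (· ++ [x, !x] ++ B) hrel.symm
  refine ⟨B, wpow (B ++ [!x, x]) k ++ (A ++ [x, !x] ++ B), hB,
    palindrome_wpow_append hP (by simpa [hB.reverse_eq] using hu) k, by simp, ?_, ?_⟩
  · calc wpow (B ++ [!x, x]) (k + 1) ++ (A ++ [x, !x])
        = wpow (B ++ [!x, x]) k ++ (B ++ [!x, x] ++ A) ++ [x, !x] := by simp [wpow_succ']
      _ = wpow (B ++ [!x, x]) k ++ (A ++ [x, !x] ++ B) ++ [!!x, !x] := by simp [hrel]
  · calc B ++ [!x, !!x] ++ (wpow (B ++ [!x, x]) k ++ (A ++ [x, !x] ++ B))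
        = wpow (B ++ [!x, x]) k ++ (B ++ [!x, x] ++ (A ++ [x, !x] ++ B)) := by
          rw [Bool.not_not, ← List.append_assoc, ← wpow_succ, wpow_succ', List.append_assoc]
      _ = wpow (B ++ [!x, x]) k ++ (A ++ [x, !x] ++ B) ++ [!!x, !x] ++ B := by
          rw [hu, Bool.not_not]
          simp only [List.append_assoc]

theorem IsCentralPair.palindrome_cons_dropLast {x : Bool} {s t : Word}
    (h : IsCentralPair x s t) (k : ℕ) : (x :: (wpow t k ++ s).dropLast).Palindrome := by
  obtain ⟨A, B, hA, hB, rfl, rfl, hrel⟩ := h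
  have hcore : (wpow (B ++ [!x, x]) k ++ A).Palindrome :=
    palindrome_wpow_append hA (by simpa [hB.reverse_eq] using hrel.symm) k
  have hdrop : (wpow (B ++ [!x, x]) k ++ (A ++ [x, !x])).dropLast
      = wpow (B ++ [!x, x]) k ++ A ++ [x] := by
    rw [show A ++ [x, !x] = A ++ [x] ++ [!x] by simp, ← List.append_assoc,
      List.dropLast_concat, List.append_assoc]
  rw [hdrop]
  exact hcore.cons_concat x

theorem standardWord_one {d : ℤ → ℕ} {s : ℤ → Word}
    (hs1 : s (-1) = [true]) (hs0 : s 0 = [false])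
    (hs : ∀ n : ℤ, 1 ≤ n → s n = wpow (s (n - 1)) (d n) ++ s (n - 2)) :
    s 1 = List.replicate (d 1) false ++ [true] := by
  simpa [hs0, hs1, wpow_singleton] using hs 1 le_rfl

theorem isCentralPair_standard {d : ℤ → ℕ} {s : ℤ → Word}
    (hd : ∀ n : ℤ, 1 ≤ n → 1 ≤ d n) (hs1 : s (-1) = [true]) (hs0 : s 0 = [false])
    (hs : ∀ n : ℤ, 1 ≤ n → s n = wpow (s (n - 1)) (d n) ++ s (n - 2)) (n : ℤ) (hn : 1 ≤ n) :
    IsCentralPair (decide (Even n)) (s n) (s (n + 1)) := by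
  induction n, hn using Int.leInduction with
  | base =>
    have hs2 : s 2 = wpow (s 1) (d 2 - 1 + 1) ++ [false] := by
      simpa [Nat.sub_add_cancel (hd 2 (by norm_num)), hs0] using hs 2 (by norm_num)
    rw [show (1 : ℤ) + 1 = 2 by norm_num, hs2, standardWord_one hs1 hs0 hs,
      ← Nat.sub_add_cancel (hd 1 le_rfl)]
    exact isCentralPair_base _ _
  | succ n hn ih =>
    have hsn : s (n + 1 + 1) = wpow (s (n + 1)) (d (n + 2) - 1 + 1) ++ s n := by
      rw [Nat.sub_add_cancel (hd _ (by omega)), hs _ (by omega)]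
      ring_nf
    have hletter : decide (Even (n + 1)) = !decide (Even n) := by
      simp only [Int.even_add_one, decide_not]
    rw [hsn, hletter]
    exact ih.succ _

theorem adjoining_singular_word_palindrome_general (d : ℤ → ℕ) (s : ℤ → Word)
    (hd : ∀ n : ℤ, 1 ≤ n → 1 ≤ d n)
    (hs1 : s (-1) = [true]) (hs0 : s 0 = [false])
    (hs : ∀ n : ℤ, 1 ≤ n → s n = wpow (s (n - 1)) (d n) ++ s (n - 2))
    (v : ℤ → Word)
    (hv : ∀ n : ℤ, -1 ≤ n → v n = (if Odd n then [false] else [true]) ++ (wpow (s (n + 1)) (d (n + 2) - 1) ++ s n).dropLast) :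
    ∀ n : ℤ, -1 ≤ n → (v n).Palindrome := by
  intro n hn
  rw [hv n hn]
  obtain rfl | rfl | hn1 : n = -1 ∨ n = 0 ∨ 1 ≤ n := by omega
  · simpa [hs0, hs1] using palindrome_cons_wpow .nil false (d 1 - 1)
  · simpa [hs0, standardWord_one hs1 hs0 hs] using
      palindrome_cons_wpow (.of_reverse_eq List.reverse_replicate) true (d 2 - 1)
  · have hletter : (if Odd n then [false] else [true]) = [decide (Even n)] := by
      by_cases h : Even n <;> simp [h, ← Int.not_even_iff_odd]
    rw [hletter, List.singleton_append]
    exact (isCentralPair_standard hd hs1 hs0 hs n hn1).palindrome_cons_dropLast _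

/-- Each adjoining singular word `vₙ` (the word `sₙ₊₁^(dₙ₊₂ - 1) sₙ` with its last
letter removed and `a` (if `n` odd) or `b` (if `n` even) prepended) is a
palindrome, for all `n ≥ -1`. -/
theorem adjoining_singular_word_palindrome (d : ℤ → ℕ) (s : ℤ → Word)
    (hd : ∀ n : ℤ, 1 ≤ n → 1 ≤ d n)
    (hs1 : s (-1) = [true]) (hs0 : s 0 = [false])
    (hs : ∀ n : ℤ, 1 ≤ n → s n = wpow (s (n - 1)) (d n) ++ s (n - 2))
    (v : ℤ → Word)
    (hv : ∀ n : ℤ, -1 ≤ n → v n = (if Odd n then [false] else [true]) ++ (wpow (s (n + 1)) (d (n + 2) - 1) ++ s n).dropLast)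
    (hvm2 : v (-2) = []) :
    ∀ n : ℤ, -1 ≤ n → (v n).Palindrome :=
  adjoining_singular_word_palindrome_general d s hd hs1 hs0 hs v hv
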